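/- arXiv:1808.08464 — 2 statements merged into one kernel-verified Lean document; each statement's English description precedes it below -/
import Mathlib

section
/- Let L₁, L₂ ⊂ ℝ^{2n} be Lagrangian subspaces. Then there exists ε > 0 such that for all θ with 0 < |θ| ≤ ε, the subspace e^{θJ}L₂ is Lagrangian and L₁ ∩ e^{θJ}L₂ = {0}. -/
open Matrix

noncomputable def stdJ (n : ℕ) : Matrix (Fin n ⊕ Fin n) (Fin n ⊕ Fin n) ℝ :=
  Matrix.fromBlocks 0 (-1) 1 0

noncomputable def omega0 {n : ℕ} (x y : Fin n ⊕ Fin n → ℝ) : ℝ :=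
  (stdJ n).mulVec x ⬝ᵥ y

def IsLagrangian {n : ℕ} (L : Submodule ℝ (Fin n ⊕ Fin n → ℝ)) : Prop :=
  Module.finrank ℝ L = n ∧ ∀ x ∈ L, ∀ y ∈ L, omega0 x y = 0

/-- `e^{θJ} = cos(θ)·I + sin(θ)·J`. -/
noncomputable def expJ (n : ℕ) (θ : ℝ) : Matrix (Fin n ⊕ Fin n) (Fin n ⊕ Fin n) ℝ :=
  Real.cos θ • (1 : Matrix (Fin n ⊕ Fin n) (Fin n ⊕ Fin n) ℝ) + Real.sin θ • stdJ n

/-!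
If `e^{θJ} u ∈ L₁` with `u ∈ L₂` and `sin θ ≠ 0`, then for `y ∈ L₁ ∩ L₂` isotropy gives
`0 = ω₀(e^{θJ} u, y) = -sin θ ⟨u, y⟩`, so `u ⊥ L₁ ∩ L₂`. The unit vectors of `L₂` orthogonal to
`L₁ ∩ L₂` form a compact set disjoint from the closed set `L₁`; since `e^{θJ} → 1` as `θ → 0`,
the tube lemma keeps `e^{θJ}` of this set off `L₁` for all small `θ`. That `e^{θJ} L₂` is
Lagrangian holds for every `θ`, because `e^{θJ}` is orthogonal and commutes with `J`.
-/

open Filter Topology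

section

variable {n : ℕ}

def IsIsotropic (L : Submodule ℝ (Fin n ⊕ Fin n → ℝ)) : Prop :=
  ∀ x ∈ L, ∀ y ∈ L, omega0 x y = 0

theorem IsLagrangian.isIsotropic {L : Submodule ℝ (Fin n ⊕ Fin n → ℝ)}
    (h : IsLagrangian L) : IsIsotropic L :=
  h.2

theorem stdJ_mul_self : stdJ n * stdJ n = -1 := by
  simp [stdJ, fromBlocks_multiply, ← fromBlocks_one, fromBlocks_neg]

theorem stdJ_transpose : (stdJ n)ᵀ = -stdJ n := by
  simp [stdJ, fromBlocks_transpose, fromBlocks_neg]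

theorem expJ_transpose_mul_self (θ : ℝ) : (expJ n θ)ᵀ * expJ n θ = 1 := by
  simp only [expJ, transpose_add, transpose_smul, transpose_one, stdJ_transpose, add_mul,
    mul_add, Matrix.smul_mul, Matrix.mul_smul, one_mul, mul_one, neg_mul, stdJ_mul_self, smul_neg]
  match_scalars
  · linear_combination Real.cos_sq_add_sin_sq θ
  · ring

theorem stdJ_mul_expJ (θ : ℝ) : stdJ n * expJ n θ = expJ n θ * stdJ n := by
  simp only [expJ, mul_add, add_mul, Matrix.mul_smul, Matrix.smul_mul, mul_one, one_mul]

theorem expJ_zero : expJ n 0 = 1 := by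
  simp [expJ]

theorem expJ_mulVec (θ : ℝ) (x : Fin n ⊕ Fin n → ℝ) :
    expJ n θ *ᵥ x = Real.cos θ • x + Real.sin θ • (stdJ n *ᵥ x) := by
  simp [expJ, add_mulVec, smul_mulVec]

theorem continuous_expJ_mulVec :
    Continuous fun p : ℝ × (Fin n ⊕ Fin n → ℝ) => expJ n p.1 *ᵥ p.2 := by
  simp only [expJ_mulVec]
  have hJ : Continuous fun x : Fin n ⊕ Fin n → ℝ => stdJ n *ᵥ x :=
    continuous_const.matrix_mulVec continuous_id
  fun_prop

theorem omega0_mulVec_mulVec {A : Matrix (Fin n ⊕ Fin n) (Fin n ⊕ Fin n) ℝ}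
    (hA : Aᵀ * A = 1) (hJA : stdJ n * A = A * stdJ n) (x y : Fin n ⊕ Fin n → ℝ) :
    omega0 (A *ᵥ x) (A *ᵥ y) = omega0 x y := by
  rw [omega0, omega0, mulVec_mulVec, hJA, ← mulVec_mulVec, dotProduct_mulVec,
    ← vecMul_transpose, vecMul_vecMul, hA, vecMul_one]

theorem IsLagrangian.map_mulVecLin {A : Matrix (Fin n ⊕ Fin n) (Fin n ⊕ Fin n) ℝ}
    (hA : Aᵀ * A = 1) (hJA : stdJ n * A = A * stdJ n) {L : Submodule ℝ (Fin n ⊕ Fin n → ℝ)}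
    (hL : IsLagrangian L) : IsLagrangian (L.map A.mulVecLin) := by
  have hinj : Function.Injective A.mulVecLin := fun x y hxy => by
    simpa [mulVec_mulVec, hA] using congrArg (Aᵀ *ᵥ ·) hxy
  refine ⟨?_, ?_⟩
  · rw [← (Submodule.equivMapOfInjective _ hinj L).finrank_eq, hL.1]
  · rintro _ ⟨x, hx, rfl⟩ _ ⟨y, hy, rfl⟩
    rw [mulVecLin_apply, mulVecLin_apply, omega0_mulVec_mulVec hA hJA]
    exact hL.2 x hx y hy

theorem omega0_expJ_mulVec_left (θ : ℝ) (x y : Fin n ⊕ Fin n → ℝ) :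
    omega0 (expJ n θ *ᵥ x) y = Real.cos θ * omega0 x y - Real.sin θ * (x ⬝ᵥ y) := by
  rw [omega0, omega0, expJ_mulVec, mulVec_add, mulVec_smul, mulVec_smul, mulVec_mulVec,
    stdJ_mul_self, neg_mulVec, one_mulVec]
  simp [add_dotProduct, sub_eq_add_neg]

theorem dotProduct_eq_zero_of_expJ_mulVec_mem {L₁ L₂ : Submodule ℝ (Fin n ⊕ Fin n → ℝ)}
    (h₁ : IsIsotropic L₁) (h₂ : IsIsotropic L₂) {θ : ℝ} (hθ : Real.sin θ ≠ 0)
    {u : Fin n ⊕ Fin n → ℝ} (hu : u ∈ L₂) (hθu : expJ n θ *ᵥ u ∈ L₁)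
    {y : Fin n ⊕ Fin n → ℝ} (hy : y ∈ L₁ ⊓ L₂) : u ⬝ᵥ y = 0 := by
  have h := h₁ _ hθu y hy.1
  rw [omega0_expJ_mulVec_left, h₂ u hu y hy.2, mul_zero, zero_sub, neg_eq_zero] at h
  exact (mul_eq_zero.mp h).resolve_left hθ

theorem eventually_expJ_mulVec_notMem {S F : Set (Fin n ⊕ Fin n → ℝ)}
    (hS : IsCompact S) (hF : IsClosed F) (hSF : Disjoint S F) :
    ∀ᶠ θ in 𝓝 0, ∀ u ∈ S, expJ n θ *ᵥ u ∉ F := by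
  refine hS.eventually_forall_of_forall_eventually fun u hu => ?_
  have hopen : IsOpen {p : ℝ × (Fin n ⊕ Fin n → ℝ) | expJ n p.1 *ᵥ p.2 ∉ F} :=
    hF.isOpen_compl.preimage continuous_expJ_mulVec
  refine hopen.mem_nhds ?_
  simpa [expJ_zero] using hSF.notMem_of_mem_left hu

def unitOrthogonalInf (L₁ L₂ : Submodule ℝ (Fin n ⊕ Fin n → ℝ)) :
    Set (Fin n ⊕ Fin n → ℝ) :=
  {u | u ∈ L₂ ∧ ‖u‖ = 1 ∧ ∀ y ∈ L₁ ⊓ L₂, u ⬝ᵥ y = 0}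

theorem isCompact_unitOrthogonalInf (L₁ L₂ : Submodule ℝ (Fin n ⊕ Fin n → ℝ)) :
    IsCompact (unitOrthogonalInf L₁ L₂) := by
  have hclosed : IsClosed {u : Fin n ⊕ Fin n → ℝ | ∀ y ∈ L₁ ⊓ L₂, u ⬝ᵥ y = 0} := by
    simp only [Set.ofPred_forall]
    exact isClosed_biInter fun y _ =>
      isClosed_eq (continuous_id.dotProduct continuous_const) continuous_const
  have hsphere : IsCompact ((L₂ : Set (Fin n ⊕ Fin n → ℝ)) ∩ Metric.sphere 0 1) :=
    (isCompact_sphere 0 1).inter_left L₂.closed_of_finiteDimensional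
  convert hsphere.inter_right hclosed using 1
  ext u
  simp [unitOrthogonalInf, and_assoc]

theorem disjoint_unitOrthogonalInf (L₁ L₂ : Submodule ℝ (Fin n ⊕ Fin n → ℝ)) :
    Disjoint (unitOrthogonalInf L₁ L₂) L₁ := by
  refine Set.disjoint_left.mpr fun u ⟨hu₂, hnorm, horth⟩ hu₁ => ?_
  have hu : u = 0 := dotProduct_self_eq_zero.mp (horth u ⟨hu₁, hu₂⟩)
  simp [hu] at hnorm

theorem eventually_inf_map_expJ_eq_bot {L₁ L₂ : Submodule ℝ (Fin n ⊕ Fin n → ℝ)}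
    (h₁ : IsIsotropic L₁) (h₂ : IsIsotropic L₂) :
    ∀ᶠ θ in 𝓝[≠] 0, L₁ ⊓ L₂.map (expJ n θ).mulVecLin = ⊥ := by
  have hfar := eventually_expJ_mulVec_notMem (isCompact_unitOrthogonalInf L₁ L₂)
    L₁.closed_of_finiteDimensional (disjoint_unitOrthogonalInf L₁ L₂)
  have hpi : Set.Ioo (-Real.pi) Real.pi ∈ 𝓝 (0 : ℝ) :=
    Ioo_mem_nhds (neg_neg_of_pos Real.pi_pos) Real.pi_pos
  filter_upwards [self_mem_nhdsWithin, nhdsWithin_le_nhds hfar, nhdsWithin_le_nhds hpi]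
    with θ hθ0 hθfar hθpi
  have hsin : Real.sin θ ≠ 0 := by
    rwa [Ne, Real.sin_eq_zero_iff_of_lt_of_lt hθpi.1 hθpi.2]
  refine (Submodule.eq_bot_iff _).mpr ?_
  rintro _ ⟨hv₁, u, hu, rfl⟩
  by_contra hne
  have hu0 : u ≠ 0 := by rintro rfl; simp at hne
  set w := ‖u‖⁻¹ • u
  have hw₂ : w ∈ L₂ := L₂.smul_mem _ hu
  have hw₁ : expJ n θ *ᵥ w ∈ L₁ := by
    rw [mulVec_smul]
    exact L₁.smul_mem _ hv₁
  refine hθfar w ⟨hw₂, ?_, fun y hy => ?_⟩ hw₁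
  · rw [norm_smul, norm_inv, norm_norm, inv_mul_cancel₀ (norm_ne_zero_iff.mpr hu0)]
  · exact dotProduct_eq_zero_of_expJ_mulVec_mem h₁ h₂ hsin hw₂ hw₁ hy

theorem exists_forall_of_eventually_nhdsNE_zero {p : ℝ → Prop} (h : ∀ᶠ θ in 𝓝[≠] 0, p θ) :
    ∃ ε > (0 : ℝ), ∀ θ : ℝ, 0 < |θ| → |θ| ≤ ε → p θ := by
  obtain ⟨ε, hε, hp⟩ := Metric.eventually_nhds_iff.mp (eventually_nhdsWithin_iff.mp h)
  refine ⟨ε / 2, half_pos hε, fun θ hθ0 hθε => hp ?_ (abs_pos.mp hθ0)⟩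
  rw [Real.dist_0_eq_abs]
  linarith

end

theorem stmt8 (n : ℕ) (L₁ L₂ : Submodule ℝ (Fin n ⊕ Fin n → ℝ))
    (h₁ : IsLagrangian L₁) (h₂ : IsLagrangian L₂) :
    ∃ ε > (0 : ℝ), ∀ θ : ℝ, 0 < |θ| → |θ| ≤ ε →
      IsLagrangian (L₂.map (expJ n θ).mulVecLin) ∧
        L₁ ⊓ L₂.map (expJ n θ).mulVecLin = ⊥ := by
  obtain ⟨ε, hε, hθ⟩ := exists_forall_of_eventually_nhdsNE_zero
    (eventually_inf_map_expJ_eq_bot h₁.isIsotropic h₂.isIsotropic)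
  exact ⟨ε, hε, fun θ hθ0 hθε =>
    ⟨h₂.map_mulVecLin (expJ_transpose_mul_self θ) (stdJ_mul_expJ θ), hθ θ hθ0 hθε⟩⟩
end

section
/- Let U, V be closed subspaces of a Hilbert space H with orthogonal projections P_U, P_V, and define δ(U,V) = sup_{u ∈ U, ‖u‖=1} dist(u,V) for U ≠ {0}. Then ‖P_U - P_V‖ = max{δ(U,V), δ(V,U)} for non-trivial closed subspaces U, V. -/
/-!
Write `x = u + y` with `u = P_U x` and `y ∈ Uᗮ`. Then `(P_U - P_V) x = (u - P_V u) - P_V y` is an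
orthogonal decomposition, `‖u - P_V u‖ ≤ δ(U,V) ‖u‖`, and `‖P_V y‖ ≤ δ(V,U) ‖y‖` because
`‖P_V y‖² = ⟪P_V y - P_U P_V y, y⟫`; Pythagoras gives `‖P_U - P_V‖ ≤ max`. Conversely
`(P_U - P_V) u = u - P_V u` for `u ∈ U`, whose norm is `dist(u, V)`.
-/

/-- `δ(U,V) = sup_{u ∈ U, ‖u‖=1} dist(u, V)`. -/
noncomputable def subspaceDelta {H : Type*} [NormedAddCommGroup H]
    [InnerProductSpace ℝ H] (U V : Submodule ℝ H) : ℝ :=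
  sSup {d : ℝ | ∃ u ∈ U, ‖u‖ = 1 ∧ d = Metric.infDist u (V : Set H)}

open Submodule

open scoped RealInnerProductSpace

section

variable {H : Type*} [NormedAddCommGroup H] [InnerProductSpace ℝ H]

theorem Submodule.infDist_eq_norm_sub_starProjection (V : Submodule ℝ H)
    [V.HasOrthogonalProjection] (u : H) :
    Metric.infDist u (V : Set H) = ‖u - V.starProjection u‖ := by
  rw [Metric.infDist_eq_iInf, starProjection_minimal]
  simp only [dist_eq_norm]
  rfl

theorem subspaceDelta_nonneg (U V : Submodule ℝ H) : 0 ≤ subspaceDelta U V :=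
  Real.sSup_nonneg <| by
    rintro d ⟨u, -, -, rfl⟩
    exact Metric.infDist_nonneg

theorem infDist_le_subspaceDelta {U : Submodule ℝ H} (V : Submodule ℝ H) {u : H}
    (hu : u ∈ U) (hu1 : ‖u‖ = 1) : Metric.infDist u (V : Set H) ≤ subspaceDelta U V := by
  refine le_csSup ⟨1, ?_⟩ ⟨u, hu, hu1, rfl⟩
  rintro d ⟨w, -, hw1, rfl⟩
  simpa [hw1] using Metric.infDist_le_dist_of_mem (x := w) V.zero_mem

theorem norm_sub_starProjection_le_subspaceDelta_mul {U : Submodule ℝ H} (V : Submodule ℝ H)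
    [V.HasOrthogonalProjection] {u : H} (hu : u ∈ U) :
    ‖u - V.starProjection u‖ ≤ subspaceDelta U V * ‖u‖ := by
  rcases eq_or_ne u 0 with rfl | hu0
  · simp
  have hnorm : 0 < ‖u‖ := norm_pos_iff.mpr hu0
  have hscaled := infDist_le_subspaceDelta V (U.smul_mem ‖u‖⁻¹ hu) (norm_smul_inv_norm hu0)
  rw [V.infDist_eq_norm_sub_starProjection, map_smul, ← smul_sub, norm_smul, norm_inv,
    norm_norm, inv_mul_le_iff₀ hnorm, mul_comm] at hscaled
  exact hscaled

theorem norm_starProjection_le_subspaceDelta_mul {U : Submodule ℝ H} (V : Submodule ℝ H)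
    [U.HasOrthogonalProjection] [V.HasOrthogonalProjection] {y : H} (hy : y ∈ Uᗮ) :
    ‖V.starProjection y‖ ≤ subspaceDelta V U * ‖y‖ := by
  set v := V.starProjection y
  have hv : v ∈ V := V.starProjection_apply_mem y
  -- `⟪v, y⟫ = ‖v‖²` since `P_V` is a self-adjoint idempotent, and `⟪P_U v, y⟫ = 0` since `y ∈ Uᗮ`
  have hsq : ‖v‖ ^ 2 = ⟪v - U.starProjection v, y⟫ := by
    rw [inner_sub_left, inner_right_of_mem_orthogonal (U.starProjection_apply_mem v) hy,
      sub_zero, ← real_inner_self_eq_norm_sq, ← V.inner_starProjection_left_eq_right,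
      V.starProjection_eq_self_iff.mpr hv]
  have hbound : ‖v‖ * ‖v‖ ≤ ‖v‖ * (subspaceDelta V U * ‖y‖) :=
    calc ‖v‖ * ‖v‖ = ⟪v - U.starProjection v, y⟫ := by rw [← hsq, sq]
      _ ≤ ‖v - U.starProjection v‖ * ‖y‖ := real_inner_le_norm _ _
      _ ≤ subspaceDelta V U * ‖v‖ * ‖y‖ := by
        gcongr
        exact norm_sub_starProjection_le_subspaceDelta_mul U hv
      _ = ‖v‖ * (subspaceDelta V U * ‖y‖) := by ring
  rcases (norm_nonneg v).eq_or_lt with hv0 | hv0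
  · rw [← hv0]
    exact mul_nonneg (subspaceDelta_nonneg V U) (norm_nonneg y)
  · exact le_of_mul_le_mul_left hbound hv0

theorem norm_starProjection_sub_starProjection_apply_le (U V : Submodule ℝ H)
    [U.HasOrthogonalProjection] [V.HasOrthogonalProjection] (x : H) :
    ‖(U.starProjection - V.starProjection) x‖ ≤
      max (subspaceDelta U V) (subspaceDelta V U) * ‖x‖ := by
  set m := max (subspaceDelta U V) (subspaceDelta V U)
  set u := U.starProjection x
  set y := Uᗮ.starProjection x
  have hu : u ∈ U := U.starProjection_apply_mem x
  have hy : y ∈ Uᗮ := Uᗮ.starProjection_apply_mem x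
  have hdecomp : (U.starProjection - V.starProjection) x =
      (u - V.starProjection u) - V.starProjection y :=
    calc (U.starProjection - V.starProjection) x = u - V.starProjection (u + y) := by
          rw [U.starProjection_add_starProjection_orthogonal x]; rfl
      _ = (u - V.starProjection u) - V.starProjection y := by rw [map_add]; abel
  have horth : ⟪u - V.starProjection u, V.starProjection y⟫ = 0 :=
    inner_left_of_mem_orthogonal (V.starProjection_apply_mem y)
      (V.sub_starProjection_mem_orthogonal u)
  have hu_le : ‖u - V.starProjection u‖ ≤ m * ‖u‖ :=
    (norm_sub_starProjection_le_subspaceDelta_mul V hu).trans <|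
      mul_le_mul_of_nonneg_right (le_max_left _ _) (norm_nonneg u)
  have hy_le : ‖V.starProjection y‖ ≤ m * ‖y‖ :=
    (norm_starProjection_le_subspaceDelta_mul V hy).trans <|
      mul_le_mul_of_nonneg_right (le_max_right _ _) (norm_nonneg y)
  have hsq : ‖(U.starProjection - V.starProjection) x‖ ^ 2 ≤ (m * ‖x‖) ^ 2 :=
    calc ‖(U.starProjection - V.starProjection) x‖ ^ 2
        = ‖u - V.starProjection u‖ ^ 2 + ‖V.starProjection y‖ ^ 2 := by
          rw [hdecomp, norm_sub_sq_real, horth]; ring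
      _ ≤ (m * ‖u‖) ^ 2 + (m * ‖y‖) ^ 2 := by gcongr
      _ = (m * ‖x‖) ^ 2 := by
          rw [mul_pow, mul_pow, mul_pow, norm_sq_eq_add_norm_sq_starProjection x U]; ring
  have hm : 0 ≤ m := le_max_of_le_left (subspaceDelta_nonneg U V)
  exact (pow_le_pow_iff_left₀ (norm_nonneg _) (by positivity) two_ne_zero).mp hsq

theorem subspaceDelta_le_norm_starProjection_sub (U V : Submodule ℝ H)
    [U.HasOrthogonalProjection] [V.HasOrthogonalProjection] :
    subspaceDelta U V ≤ ‖U.starProjection - V.starProjection‖ := by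
  refine Real.sSup_le ?_ (norm_nonneg _)
  rintro d ⟨u, hu, hu1, rfl⟩
  calc Metric.infDist u (V : Set H) = ‖(U.starProjection - V.starProjection) u‖ := by
        rw [V.infDist_eq_norm_sub_starProjection, sub_apply,
          U.starProjection_eq_self_iff.mpr hu]
    _ ≤ ‖U.starProjection - V.starProjection‖ := by
        simpa [hu1] using (U.starProjection - V.starProjection).le_opNorm u

end

theorem stmt11_general {H : Type*} [NormedAddCommGroup H] [InnerProductSpace ℝ H]
    (U V : Submodule ℝ H)
    [U.HasOrthogonalProjection] [V.HasOrthogonalProjection] :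
    ‖U.subtypeL.comp U.orthogonalProjectionOnto -
        V.subtypeL.comp V.orthogonalProjectionOnto‖ =
      max (subspaceDelta U V) (subspaceDelta V U) := by
  change ‖U.starProjection - V.starProjection‖ = _
  refine le_antisymm ?_ (max_le (subspaceDelta_le_norm_starProjection_sub U V) ?_)
  · exact ContinuousLinearMap.opNorm_le_bound _ (le_max_of_le_left (subspaceDelta_nonneg U V))
      (norm_starProjection_sub_starProjection_apply_le U V)
  · rw [norm_sub_rev]
    exact subspaceDelta_le_norm_starProjection_sub V U

theorem stmt11 {H : Type*} [NormedAddCommGroup H] [InnerProductSpace ℝ H]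
    [CompleteSpace H] (U V : Submodule ℝ H)
    [U.HasOrthogonalProjection] [V.HasOrthogonalProjection]
    (hU : U ≠ ⊥) (hV : V ≠ ⊥) :
    ‖U.subtypeL.comp U.orthogonalProjectionOnto -
        V.subtypeL.comp V.orthogonalProjectionOnto‖ =
      max (subspaceDelta U V) (subspaceDelta V U) :=
  stmt11_general U V
end
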